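/- Let n ≥ 3 and i, j ∈ ℤ/nℤ. Then for every natural number ℓ, the 6-tuple of reflections (s_0, s_0, s_i, s_i, s_j, s_j) in D_n is Hurwitz equivalent to (s_0, s_0, s_i, s_i, s_{j−2ℓi}, s_{j−2ℓi}). -/
import Mathlib


/-- One elementary braid (Hurwitz) move on a tuple of elements of a group `G`,
encoded as a list: `σᵢ` replaces the adjacent pair `(a, b)` occurring at some
position by `(a * b * a⁻¹, a)`. -/
inductive BraidStep {G : Type*} [Group G] : List G → List G → Prop
  | head (a b : G) (t : List G) : BraidStep (a :: b :: t) (a * b * a⁻¹ :: a :: t)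
  | tail (a : G) {l₁ l₂ : List G} : BraidStep l₁ l₂ → BraidStep (a :: l₁) (a :: l₂)

/-- Hurwitz (braid) equivalence: the equivalence relation generated by
elementary braid moves (so finitely many moves and their inverses). -/
def HurwitzEquiv {G : Type*} [Group G] : List G → List G → Prop :=
  Relation.EqvGen BraidStep

/-- Braid-automorphism equivalence: `v` and `w` differ by a braid move sequence
together with the diagonal action of a group automorphism. -/
def BAEquiv {G : Type*} [Group G] (v w : List G) : Prop :=
  ∃ φ : G ≃* G, HurwitzEquiv (v.map ⇑φ) w

/-- A `G`-Hurwitz vector (genus 0): all entries nontrivial, the entries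
generate `G`, and the product of the entries is `1`. -/
def IsHurwitzVector {G : Type*} [Group G] (v : List G) : Prop :=
  (∀ c ∈ v, c ≠ 1) ∧ Subgroup.closure {g | g ∈ v} = ⊤ ∧ v.prod = 1

/-- The reflection `s i = x^i * y` of the dihedral group `D_n`,
where `x = DihedralGroup.r 1` and `y = DihedralGroup.sr 0`. -/
def sD {n : ℕ} (i : ZMod n) : DihedralGroup n :=
  DihedralGroup.r i * DihedralGroup.sr 0

/-- Being a reflection in the dihedral group. -/
def IsReflection {n : ℕ} (g : DihedralGroup n) : Prop :=
  ∃ i : ZMod n, g = DihedralGroup.sr i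

lemma sD_eq_sr {n : ℕ} (a : ZMod n) : sD a = DihedralGroup.sr (-a) := by
  simp [sD, DihedralGroup.r_mul_sr, zero_sub]

lemma sD_inv {n : ℕ} (a : ZMod n) : (sD a)⁻¹ = sD a := by
  rw [inv_eq_iff_mul_eq_one, sD_eq_sr, DihedralGroup.sr_mul_self]

lemma sD_conj {n : ℕ} (a b : ZMod n) : sD a * sD b * (sD a)⁻¹ = sD (2 * a - b) := by
  rw [sD_inv, sD_eq_sr, sD_eq_sr, sD_eq_sr, DihedralGroup.sr_mul_sr,
    DihedralGroup.r_mul_sr]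
  ring_nf

lemma braidStep_append {G : Type*} [Group G] (pre : List G) (a b : G) (t : List G) :
    BraidStep (pre ++ a :: b :: t) (pre ++ (a * b * a⁻¹) :: a :: t) := by
  induction pre with
  | nil => exact BraidStep.head a b t
  | cons x xs ih => exact BraidStep.tail x ih

lemma hstepF {n : ℕ} (pre : List (DihedralGroup n)) (a b c : ZMod n)
    (h : c = 2 * a - b) (t : List (DihedralGroup n)) :
    HurwitzEquiv (pre ++ sD a :: sD b :: t) (pre ++ sD c :: sD a :: t) := by
  have := braidStep_append pre (sD a) (sD b) t
  rw [sD_conj, ← h] at this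
  exact Relation.EqvGen.rel _ _ this

lemma hstepI {n : ℕ} (pre : List (DihedralGroup n)) (a b c : ZMod n)
    (h : c = 2 * b - a) (t : List (DihedralGroup n)) :
    HurwitzEquiv (pre ++ sD a :: sD b :: t) (pre ++ sD b :: sD c :: t) :=
  Relation.EqvGen.symm _ _ (hstepF pre b c a (by rw [h]; ring) t)

lemma core_step {n : ℕ} (i a : ZMod n) :
    HurwitzEquiv
      [sD (0 : ZMod n), sD (0 : ZMod n), sD i, sD i, sD a, sD a]
      [sD (0 : ZMod n), sD (0 : ZMod n), sD i, sD i, sD (a - 2 * i), sD (a - 2 * i)] := by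
  refine Relation.EqvGen.trans _ _ _ (hstepF [sD 0] 0 i (-i) (by ring) [sD i, sD a, sD a]) ?_
  refine Relation.EqvGen.trans _ _ _
    (hstepF [sD 0, sD (-i), sD 0] i a (2*i - a) (by ring) [sD a]) ?_
  refine Relation.EqvGen.trans _ _ _
    (hstepF [sD 0, sD (-i)] 0 (2*i - a) (a - 2*i) (by ring) [sD i, sD a]) ?_
  refine Relation.EqvGen.trans _ _ _
    (hstepF [sD 0, sD (-i), sD (a - 2*i), sD 0] i a (2*i - a) (by ring) []) ?_
  refine Relation.EqvGen.trans _ _ _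
    (hstepF [sD 0, sD (-i), sD (a - 2*i)] 0 (2*i - a) (a - 2*i) (by ring) [sD i]) ?_
  refine Relation.EqvGen.trans _ _ _
    (hstepF [sD 0, sD (-i), sD (a - 2*i)] (a - 2*i) 0 (2*a - 4*i) (by ring) [sD i]) ?_
  refine Relation.EqvGen.trans _ _ _
    (hstepF [sD 0, sD (-i)] (a - 2*i) (2*a - 4*i) 0 (by ring) [sD (a - 2*i), sD i]) ?_
  refine Relation.EqvGen.trans _ _ _
    (hstepI [sD 0] (-i) 0 i (by ring) [sD (a - 2*i), sD (a - 2*i), sD i]) ?_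
  refine Relation.EqvGen.trans _ _ _
    (hstepF [sD 0, sD 0, sD i, sD (a - 2*i)] (a - 2*i) i (2*a - 5*i) (by ring) []) ?_
  exact hstepF [sD 0, sD 0, sD i] (a - 2*i) (2*a - 5*i) i (by ring) [sD (a - 2*i)]

/-- for every `ℓ ∈ ℕ`, `(s_0, s_0, s_i, s_i, s_j, s_j)` is Hurwitz equivalent
to `(s_0, s_0, s_i, s_i, s_{j-2ℓi}, s_{j-2ℓi})`. -/
theorem six_tuple_reduction (n : ℕ) (hn : 3 ≤ n) (i j : ZMod n) (ℓ : ℕ) :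
    HurwitzEquiv
      [sD (0 : ZMod n), sD (0 : ZMod n), sD i, sD i, sD j, sD j]
      [sD (0 : ZMod n), sD (0 : ZMod n), sD i, sD i,
       sD (j - 2 * (ℓ : ZMod n) * i), sD (j - 2 * (ℓ : ZMod n) * i)] := by
  induction ℓ with
  | zero =>
      simp only [Nat.cast_zero, mul_zero, zero_mul, sub_zero]
      exact Relation.EqvGen.refl _
  | succ m ih =>
      refine Relation.EqvGen.trans _ _ _ ih ?_
      have h := core_step i (j - 2 * (m : ZMod n) * i)
      have : j - 2 * (m : ZMod n) * i - 2 * i = j - 2 * ((m + 1 : ℕ) : ZMod n) * i := by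
        push_cast; ring
      rwa [this] at h
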